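/- arXiv:2308.07904 — 9 statements merged into one kernel-verified Lean document; each statement's English description precedes it below -/
import Mathlib

section
/- Let G be a subgroup of S₅ = Equiv.Perm (Fin 5), acting on D by permuting coordinates, and let n be the number of orbits of G on Fin 5. Then the subgroup of G-fixed points {a ∈ D | σ • a = a for all σ ∈ G} has exactly 2^(n−1) elements. -/
/-!
A vector fixed by `G` is a function on the `n` orbits of `G`, so there are `2 ^ n` of them.
Since `5` is odd, adding the all-ones vector swaps the fixed vectors of even and of odd
coordinate sum, so exactly half of them lie in `D`.
-/

open MulAction

section Invariants

variable {G α : Type*} [Group G] [MulAction G α]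

variable (G α) in
def invariantFunEquiv (β : Type*) :
    {a : α → β // ∀ (g : G) x, a (g • x) = a x} ≃ (orbitRel.Quotient G α → β) where
  toFun a := Quotient.lift a.1 fun _ y ⟨g, hg⟩ => hg ▸ a.2 g y
  invFun f := ⟨f ∘ Quotient.mk _, fun g x => congrArg f (Quotient.sound (mem_orbit x g))⟩
  left_inv _ := rfl
  right_inv _ := funext fun q => Quotient.inductionOn q fun _ => rfl

theorem card_invariant_fun [Finite α] (β : Type*) :
    Nat.card {a : α → β // ∀ (g : G) x, a (g • x) = a x} =
      Nat.card β ^ Nat.card (orbitRel.Quotient G α) := by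
  rw [Nat.card_congr (invariantFunEquiv G α β), Nat.card_fun]

theorem add_one_invariant_iff (a : α → ZMod 2) :
    (∀ (g : G) x, (a + 1) (g • x) = (a + 1) x) ↔ ∀ (g : G) x, a (g • x) = a x := by
  simp only [Pi.add_apply, Pi.one_apply, add_left_inj]

end Invariants

theorem Equiv.Perm.comp_inv_eq_self_iff_forall_smul {α β : Type*}
    (H : Subgroup (Equiv.Perm α)) (a : α → β) :
    (∀ σ ∈ H, a ∘ ⇑σ⁻¹ = a) ↔ ∀ (g : H) x, a (g • x) = a x := by
  constructor
  · intro h g x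
    simpa [Subgroup.smul_def, Equiv.Perm.smul_def] using congrFun (h _ (inv_mem g.2)) x
  · intro h σ hσ
    funext x
    simpa [Subgroup.smul_def, Equiv.Perm.smul_def] using h ⟨σ, hσ⟩⁻¹ x

theorem ZMod.two_add_one_ne_zero_iff (x : ZMod 2) : x + 1 ≠ 0 ↔ x = 0 := by
  revert x; decide

section OddCard

variable {α : Type*} [Fintype α]

theorem sum_add_one_of_odd_card (hα : Odd (Fintype.card α)) (a : α → ZMod 2) :
    ∑ i, (a + 1) i = ∑ i, a i + 1 := by
  simp [Finset.sum_add_distrib, hα.natCast_zmod_two]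

theorem two_mul_card_sum_eq_zero (hα : Odd (Fintype.card α)) (P : (α → ZMod 2) → Prop)
    (hP : ∀ a, P (a + 1) ↔ P a) :
    2 * Nat.card {a : α → ZMod 2 // ∑ i, a i = 0 ∧ P a} = Nat.card {a // P a} := by
  classical
  have hflip : Nat.card {a : α → ZMod 2 // ∑ i, a i = 0 ∧ P a} =
      Nat.card {a : α → ZMod 2 // ¬ ∑ i, a i = 0 ∧ P a} :=
    Nat.card_congr <| (Equiv.addRight 1).subtypeEquiv fun a => by
      rw [Equiv.coe_addRight, sum_add_one_of_odd_card hα, hP, ← ne_eq,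
        ZMod.two_add_one_ne_zero_iff]
  rw [two_mul]
  nth_rw 2 [hflip]
  simp only [Nat.card_eq_fintype_card, Fintype.card_subtype]
  rw [← Finset.card_filter_add_card_filter_not (s := Finset.univ.filter P)
    (fun a => ∑ i, a i = 0), Finset.filter_filter, Finset.filter_filter]
  simp only [and_comm]

theorem card_invariant_sum_eq_zero {G : Type*} [Group G] [MulAction G α]
    (hα : Odd (Fintype.card α)) :
    Nat.card {a : α → ZMod 2 // ∑ i, a i = 0 ∧ ∀ (g : G) x, a (g • x) = a x} =
      2 ^ (Nat.card (orbitRel.Quotient G α) - 1) := by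
  have hhalf := two_mul_card_sum_eq_zero hα (fun a => ∀ (g : G) x, a (g • x) = a x)
    add_one_invariant_iff
  rw [card_invariant_fun, Nat.card_zmod] at hhalf
  obtain ⟨x⟩ : Nonempty α := Fintype.card_pos_iff.mp hα.pos
  have : Nonempty (orbitRel.Quotient G α) := ⟨Quotient.mk _ x⟩
  obtain ⟨n, hn⟩ := Nat.exists_eq_add_one_of_ne_zero
    (Nat.card_pos (α := orbitRel.Quotient G α)).ne'
  rw [hn, pow_succ'] at hhalf
  rw [hn, Nat.add_sub_cancel]
  exact Nat.eq_of_mul_eq_mul_left two_pos hhalf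

end OddCard

/-- Let `G ≤ S₅` act on
`D = {a : Fin 5 → ZMod 2 | a 0 + a 1 + a 2 + a 3 + a 4 = 0}` by permuting
coordinates, and let `n` be the number of orbits of `G` on `Fin 5`.  Then the
fixed-point subgroup `{a ∈ D | ∀ σ ∈ G, a ∘ σ⁻¹ = a}` has exactly `2 ^ (n - 1)`
elements. -/
theorem card_fixed_points_eq_two_pow (G : Subgroup (Equiv.Perm (Fin 5))) :
    Nat.card {a : Fin 5 → ZMod 2 //
        (a 0 + a 1 + a 2 + a 3 + a 4 = 0) ∧
        ∀ σ : Equiv.Perm (Fin 5), σ ∈ G → a ∘ ⇑σ⁻¹ = a} =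
      2 ^ (Nat.card (MulAction.orbitRel.Quotient G (Fin 5)) - 1) := by
  simp only [← Fin.sum_univ_five, Equiv.Perm.comp_inv_eq_self_iff_forall_smul]
  exact card_invariant_sum_eq_zero (by decide)
end

section
/- Let T := ⟨c₁, c₂, c₃⟩ be the subgroup of D generated by c₁, c₂, c₃ (a subgroup of order 8), and let σ = (123) act on D by permuting coordinates. The nontrivial subgroups H of T that are invariant under σ (i.e. σ • h ∈ H for all h ∈ H) are exactly the following three: ⟨c₄ + c₅⟩, ⟨c₁ + c₂, c₂ + c₃⟩, and T itself. (Note c₄ + c₅ = c₁ + c₂ + c₃.) -/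
/-- The group `D = {a : (ℤ/2)⁵ | a 0 + a 1 + a 2 + a 3 + a 4 = 0}`. -/
def Dcar : AddSubgroup (Fin 5 → ZMod 2) where
  carrier := {a | a 0 + a 1 + a 2 + a 3 + a 4 = 0}
  zero_mem' := by simp
  add_mem' := by
    intro a b ha hb
    simp only [Set.mem_setOf_eq, Pi.add_apply] at *
    linear_combination ha + hb
  neg_mem' := by
    intro a ha
    simp only [Set.mem_setOf_eq, Pi.neg_apply] at *
    linear_combination -ha

lemma mem_Dcar {a : Fin 5 → ZMod 2} : a ∈ Dcar ↔ ∑ i, a i = 0 := by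
  simp [Dcar, Fin.sum_univ_five]

/-- Permutation of the coordinates (`σ • a = a ∘ σ⁻¹`) as an additive
automorphism of `D`. -/
def dperm (σ : Equiv.Perm (Fin 5)) : Dcar ≃+ Dcar where
  toFun a := ⟨(a : Fin 5 → ZMod 2) ∘ σ.symm, by
    rw [mem_Dcar]
    have := mem_Dcar.mp a.2
    simpa [Function.comp] using (Equiv.sum_comp σ.symm (a : Fin 5 → ZMod 2)).trans this⟩
  invFun a := ⟨(a : Fin 5 → ZMod 2) ∘ σ, by
    rw [mem_Dcar]
    have := mem_Dcar.mp a.2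
    simpa [Function.comp] using (Equiv.sum_comp σ (a : Fin 5 → ZMod 2)).trans this⟩
  left_inv a := by ext j; simp
  right_inv a := by ext j; simp
  map_add' a b := by ext j; simp

/-- The action of `S₅` on `Multiplicative D` by permuting coordinates. -/
def S5toAut : Equiv.Perm (Fin 5) →* MulAut (Multiplicative Dcar) where
  toFun σ := AddEquiv.toMultiplicative (dperm σ)
  map_one' := by ext a; rfl
  map_mul' σ τ := by ext a; rfl

/-- The Weyl group `W(D₅) = D ⋊ S₅`. -/
abbrev W := SemidirectProduct (Multiplicative Dcar) (Equiv.Perm (Fin 5)) S5toAut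

/-- The generators `cᵢ` of `D`: zero in coordinate `i`, one elsewhere.
(Coordinates `1,…,5` are indexed by `0,…,4 : Fin 5`.) -/
def c (i : Fin 5) : Dcar :=
  ⟨fun j => if j = i then 0 else 1, by rw [mem_Dcar]; fin_cases i <;> decide⟩

/-- The element `(a, σ)` of `W = D ⋊ S₅`. -/
def w (a : Dcar) (σ : Equiv.Perm (Fin 5)) : W := ⟨Multiplicative.ofAdd a, σ⟩

/-- The 3-cycle `(123)` (on coordinates labelled `1,…,5`). -/
def σ123 : Equiv.Perm (Fin 5) := Equiv.swap 0 1 * Equiv.swap 1 2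

/-! `dperm σ123` permutes `c 0, c 1, c 2` cyclically and fixes `c 3 + c 4 = c 0 + c 1 + c 2`, so
the nonzero elements of `T` form three orbits: `{c 3 + c 4}`, the pairs `c i + c j`, and the
singletons `c i`. An invariant subgroup meeting an orbit contains all of it. The `c i` generate
`T` and the pairs generate `Teven`; an invariant `H ≤ T` containing a pair but no `c i` cannot
contain `c 3 + c 4`, since adding it to a pair gives some `c i`, so it is `Teven`. If `H` meets
neither orbit, it is `{0, c 3 + c 4}`. -/

open Set

theorem Set.MapsTo.mem_of_three_cycle {α : Type*} {f : α → α} {s : Set α} (hf : MapsTo f s s)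
    {a b d : α} (hab : f a = b) (hbd : f b = d) (hda : f d = a) (h : a ∈ s ∨ b ∈ s ∨ d ∈ s) :
    a ∈ s ∧ b ∈ s ∧ d ∈ s := by
  have step {x y : α} (hxy : f x = y) (hx : x ∈ s) : y ∈ s := hxy ▸ hf hx
  rcases h with h | h | h
  · exact ⟨h, step hab h, step hbd (step hab h)⟩
  · exact ⟨step hda (step hbd h), h, step hbd h⟩
  · exact ⟨step hda h, step hab (step hda h), h⟩

theorem AddSubgroup.mapsTo_closure {G F : Type*} [AddGroup G] [FunLike F G G]
    [AddMonoidHomClass F G G] (φ : F) {s : Set G}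
    (hs : MapsTo φ s (AddSubgroup.closure s)) :
    MapsTo φ (AddSubgroup.closure s) (AddSubgroup.closure s) :=
  fun _ hx => (AddSubgroup.closure_le (.comap (φ : G →+ G) (.closure s))).mpr hs hx

def T : AddSubgroup Dcar := AddSubgroup.closure {c 0, c 1, c 2}

def Teven : AddSubgroup Dcar := AddSubgroup.closure {c 0 + c 1, c 1 + c 2}

def Tfix : AddSubgroup Dcar := AddSubgroup.closure {c 3 + c 4}

theorem mem_T_iff {x : Dcar} :
    x ∈ T ↔ x = 0 ∨ x = c 3 + c 4 ∨ x = c 0 + c 1 ∨ x = c 1 + c 2 ∨ x = c 2 + c 0 ∨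
      x = c 0 ∨ x = c 1 ∨ x = c 2 := by
  let E : Finset Dcar := {0, c 3 + c 4, c 0 + c 1, c 1 + c 2, c 2 + c 0, c 0, c 1, c 2}
  have hE : ∀ y ∈ E, ∀ z ∈ E, y + z ∈ E := by decide
  suffices x ∈ T ↔ x ∈ E by simpa [E] using this
  constructor
  · intro hx
    induction hx using AddSubgroup.closure_induction with
    | mem y hy => rcases hy with rfl | rfl | rfl <;> decide
    | zero => decide
    | add y z _ _ hy hz => exact hE y hy z hz
    | neg y _ hy => rwa [ZModModule.neg_eq_self]
  · intro hx
    have h0 : c 0 ∈ T := AddSubgroup.subset_closure (by simp)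
    have h1 : c 1 ∈ T := AddSubgroup.subset_closure (by simp)
    have h2 : c 2 ∈ T := AddSubgroup.subset_closure (by simp)
    have hs : c 3 + c 4 = c 0 + c 1 + c 2 := by decide
    simp only [E, Finset.mem_insert, Finset.mem_singleton] at hx
    rcases hx with rfl | rfl | rfl | rfl | rfl | rfl | rfl | rfl
    exacts [zero_mem _, hs ▸ add_mem (add_mem h0 h1) h2, add_mem h0 h1, add_mem h1 h2,
      add_mem h2 h0, h0, h1, h2]

theorem Tfix_le_T : Tfix ≤ T :=
  (AddSubgroup.closure_le _).mpr <| by simp [mem_T_iff]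

theorem Teven_le_T : Teven ≤ T :=
  (AddSubgroup.closure_le _).mpr <| by simp [insert_subset_iff, mem_T_iff]

theorem Tfix_ne_bot : Tfix ≠ ⊥ :=
  AddSubgroup.closure_eq_bot_iff.not.mpr <| by simp; decide

theorem Teven_ne_bot : Teven ≠ ⊥ :=
  AddSubgroup.closure_eq_bot_iff.not.mpr <| by simp; decide

theorem T_ne_bot : T ≠ ⊥ :=
  ne_bot_of_le_ne_bot Teven_ne_bot Teven_le_T

theorem mapsTo_Tfix : MapsTo (dperm σ123) Tfix Tfix :=
  AddSubgroup.mapsTo_closure (dperm σ123) <| by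
    rintro x (rfl : x = c 3 + c 4)
    rw [show dperm σ123 (c 3 + c 4) = c 3 + c 4 by decide]
    exact AddSubgroup.subset_closure rfl

theorem mapsTo_Teven : MapsTo (dperm σ123) Teven Teven :=
  AddSubgroup.mapsTo_closure (dperm σ123) <| by
    have g01 : c 0 + c 1 ∈ Teven := AddSubgroup.subset_closure (by simp)
    have g12 : c 1 + c 2 ∈ Teven := AddSubgroup.subset_closure (by simp)
    rintro _ (rfl | rfl)
    · exact (by decide : c 1 + c 2 = dperm σ123 (c 0 + c 1)) ▸ g12
    · exact (by decide : c 0 + c 1 + (c 1 + c 2) = dperm σ123 (c 1 + c 2)) ▸ add_mem g01 g12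

theorem mapsTo_T : MapsTo (dperm σ123) T T :=
  AddSubgroup.mapsTo_closure (dperm σ123) <| by
    refine MapsTo.mono_right ?_ AddSubgroup.subset_closure
    rintro _ (rfl | rfl | rfl) <;> simp only [mem_insert_iff, mem_singleton_iff] <;> decide

section

variable {H : AddSubgroup Dcar}

theorem T_le_of_mapsTo (hH : MapsTo (dperm σ123) H H) (h : c 0 ∈ H ∨ c 1 ∈ H ∨ c 2 ∈ H) :
    T ≤ H := by
  obtain ⟨h0, h1, h2⟩ := hH.mem_of_three_cycle (by decide) (by decide) (by decide) h
  rw [T, AddSubgroup.closure_le]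
  rintro x (rfl | rfl | rfl) <;> assumption

theorem Teven_le_of_mapsTo (hH : MapsTo (dperm σ123) H H)
    (h : c 0 + c 1 ∈ H ∨ c 1 + c 2 ∈ H ∨ c 2 + c 0 ∈ H) : Teven ≤ H := by
  obtain ⟨h01, h12, -⟩ := hH.mem_of_three_cycle (by decide) (by decide) (by decide) h
  rw [Teven, AddSubgroup.closure_le]
  rintro x (rfl | rfl) <;> assumption

theorem le_Teven (hle : H ≤ T) (h0 : c 0 ∉ H) (h1 : c 1 ∉ H) (h2 : c 2 ∉ H)
    (h01 : c 0 + c 1 ∈ H) : H ≤ Teven := by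
  have g01 : c 0 + c 1 ∈ Teven := AddSubgroup.subset_closure (by simp)
  have g12 : c 1 + c 2 ∈ Teven := AddSubgroup.subset_closure (by simp)
  intro x hx
  rcases mem_T_iff.mp (hle hx) with rfl | rfl | rfl | rfl | rfl | rfl | rfl | rfl
  · exact zero_mem _
  · exact absurd ((by decide : c 3 + c 4 + (c 0 + c 1) = c 2) ▸ add_mem hx h01) h2
  · exact g01
  · exact g12
  · exact (by decide : c 0 + c 1 + (c 1 + c 2) = c 2 + c 0) ▸ add_mem g01 g12
  · exact absurd hx h0
  · exact absurd hx h1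
  · exact absurd hx h2

theorem eq_Tfix (hle : H ≤ T) (hne : H ≠ ⊥) (h0 : c 0 ∉ H) (h1 : c 1 ∉ H) (h2 : c 2 ∉ H)
    (h01 : c 0 + c 1 ∉ H) (h12 : c 1 + c 2 ∉ H) (h20 : c 2 + c 0 ∉ H) : H = Tfix := by
  have hmem : ∀ x ∈ H, x = 0 ∨ x = c 3 + c 4 := by
    intro x hx
    rcases mem_T_iff.mp (hle hx) with rfl | rfl | rfl | rfl | rfl | rfl | rfl | rfl <;>
      first | simp | contradiction
  obtain ⟨x, hx, hx0⟩ := H.bot_or_exists_ne_zero.resolve_left hne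
  refine le_antisymm (fun y hy => ?_) ((AddSubgroup.closure_le _).mpr ?_)
  · rcases hmem y hy with rfl | rfl
    exacts [zero_mem _, AddSubgroup.subset_closure rfl]
  · rintro _ rfl
    exact (hmem x hx).resolve_left hx0 ▸ hx

end

/-- Let `T = ⟨c₁, c₂, c₃⟩ ≤ D` and let `σ = (123)` act on `D`
by permuting coordinates.  The nontrivial subgroups of `T` invariant under `σ`
are exactly `⟨c₄ + c₅⟩`, `⟨c₁ + c₂, c₂ + c₃⟩`, and `T` itself. -/
theorem invariant_subgroups_of_T (H : AddSubgroup Dcar) :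
    (H ≤ AddSubgroup.closure ({c 0, c 1, c 2} : Set Dcar) ∧ H ≠ ⊥ ∧
        ∀ h ∈ H, dperm σ123 h ∈ H) ↔
      (H = AddSubgroup.closure ({c 3 + c 4} : Set Dcar) ∨
        H = AddSubgroup.closure ({c 0 + c 1, c 1 + c 2} : Set Dcar) ∨
        H = AddSubgroup.closure ({c 0, c 1, c 2} : Set Dcar)) := by
  constructor
  · rintro ⟨hle, hne, hH⟩
    replace hH : MapsTo (dperm σ123) H H := fun x hx => hH x hx
    by_cases hsingle : c 0 ∈ H ∨ c 1 ∈ H ∨ c 2 ∈ H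
    · exact .inr <| .inr <| le_antisymm hle (T_le_of_mapsTo hH hsingle)
    obtain ⟨h0, h1, h2⟩ : c 0 ∉ H ∧ c 1 ∉ H ∧ c 2 ∉ H := by tauto
    by_cases hpair : c 0 + c 1 ∈ H ∨ c 1 + c 2 ∈ H ∨ c 2 + c 0 ∈ H
    · have hTeven := Teven_le_of_mapsTo hH hpair
      exact .inr <| .inl <|
        le_antisymm (le_Teven hle h0 h1 h2 (hTeven (AddSubgroup.subset_closure (by simp)))) hTeven
    obtain ⟨h01, h12, h20⟩ : c 0 + c 1 ∉ H ∧ c 1 + c 2 ∉ H ∧ c 2 + c 0 ∉ H := by tauto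
    exact .inl (eq_Tfix hle hne h0 h1 h2 h01 h12 h20)
  · rintro (rfl | rfl | rfl)
    exacts [⟨Tfix_le_T, Tfix_ne_bot, mapsTo_Tfix⟩, ⟨Teven_le_T, Teven_ne_bot, mapsTo_Teven⟩,
      ⟨le_rfl, T_ne_bot, mapsTo_T⟩]
end

section
/- Let σ = (123) ∈ S₅. The four cyclic subgroups of W generated respectively by (c₄ + c₅, σ), (c₁, σ), (c₂, σ), and (c₃, σ) are pairwise conjugate in W. -/
/-! All four generators have permutation part `σ`, and conjugating `(a, σ)` by `(b, 1)` gives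
`(a + b + σ • b, σ)` since `D` has exponent 2. Each of `c₁, c₂, c₃` differs from `c₄ + c₅` by such
a coboundary `b + σ • b`, so the four generators are conjugate, and hence so are the cyclic
subgroups they generate. -/

theorem SemidirectProduct.isConj_mk {N G : Type*} [Group N] [Group G] {φ : G →* MulAut N}
    (n m : N) (g : G) :
    IsConj (⟨m, g⟩ : N ⋊[φ] G) ⟨n * m * φ g n⁻¹, g⟩ :=
  isConj_iff.mpr ⟨SemidirectProduct.inl n, by
    ext <;> simp [SemidirectProduct.mul_left, SemidirectProduct.mul_right,
      SemidirectProduct.inv_left, SemidirectProduct.inv_right]⟩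

theorem Subgroup.exists_map_conj_zpowers_eq {G : Type*} [Group G] {x y : G} (h : IsConj x y) :
    ∃ g : G, (zpowers x).map (MulAut.conj g).toMonoidHom = zpowers y := by
  obtain ⟨g, rfl⟩ := isConj_iff.mp h
  exact ⟨g, MonoidHom.map_zpowers _ _⟩

theorem Subgroup.exists_map_conj_eq_of_mem_image_zpowers {G : Type*} [Group G] {x : G}
    {S : Set G} (hS : ∀ y ∈ S, IsConj x y) :
    ∀ H₁ ∈ zpowers '' S, ∀ H₂ ∈ zpowers '' S,
      ∃ g : G, H₁.map (MulAut.conj g).toMonoidHom = H₂ := by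
  rintro _ ⟨y₁, hy₁, rfl⟩ _ ⟨y₂, hy₂, rfl⟩
  exact exists_map_conj_zpowers_eq ((hS y₁ hy₁).symm.trans (hS y₂ hy₂))

theorem isConj_w_of_add_eq {a a' : Dcar} {σ : Equiv.Perm (Fin 5)} (b : Dcar)
    (h : b + a = a' + dperm σ b) : IsConj (w a σ) (w a' σ) := by
  obtain rfl : a' = b + a - dperm σ b := eq_sub_of_add_eq h.symm
  rw [sub_eq_add_neg, ← map_neg]
  exact SemidirectProduct.isConj_mk (φ := S5toAut)
    (Multiplicative.ofAdd b) (Multiplicative.ofAdd a) σ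

/- For `i < 3` we have `{σ i, σ² i} = {0, 1, 2} \ {i}` and `σ` fixes `3`, so
`b + σ • b = e (σ i) + e (σ² i)` is the indicator of `{0, 1, 2} \ {i}`, which is `c i + (c 3 + c 4)`. -/
def conjugator (i : Fin 5) : Dcar :=
  ⟨Pi.single (σ123 i) 1 + Pi.single 3 1, by
    simp only [mem_Dcar, Pi.add_apply, Finset.sum_add_distrib, Fintype.sum_pi_single']
    decide⟩

theorem conjugator_spec (i : Fin 5) (hi : i < 3) :
    conjugator i + (c 3 + c 4) = c i + dperm σ123 (conjugator i) := by
  revert i; decide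

theorem isConj_w_c (i : Fin 5) (hi : i < 3) : IsConj (w (c 3 + c 4) σ123) (w (c i) σ123) :=
  isConj_w_of_add_eq (conjugator i) (conjugator_spec i hi)

/-- For `σ = (123)`, the four cyclic subgroups of `W`
generated by `(c₄ + c₅, σ)`, `(c₁, σ)`, `(c₂, σ)`, `(c₃, σ)` are pairwise
conjugate in `W`. -/
theorem four_cyclic_subgroups_conjugate :
    ∀ H₁ ∈ ({Subgroup.zpowers (w (c 3 + c 4) σ123),
          Subgroup.zpowers (w (c 0) σ123),
          Subgroup.zpowers (w (c 1) σ123),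
          Subgroup.zpowers (w (c 2) σ123)} : Set (Subgroup W)),
      ∀ H₂ ∈ ({Subgroup.zpowers (w (c 3 + c 4) σ123),
          Subgroup.zpowers (w (c 0) σ123),
          Subgroup.zpowers (w (c 1) σ123),
          Subgroup.zpowers (w (c 2) σ123)} : Set (Subgroup W)),
        ∃ g : W, Subgroup.map (MulAut.conj g).toMonoidHom H₁ = H₂ := by
  have hconj : ∀ y ∈ ({w (c 3 + c 4) σ123, w (c 0) σ123, w (c 1) σ123, w (c 2) σ123} : Set W),
      IsConj (w (c 3 + c 4) σ123) y := by
    simp only [Set.mem_insert_iff, Set.mem_singleton_iff]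
    rintro y (rfl | rfl | rfl | rfl)
    exacts [.refl _, isConj_w_c 0 (by decide), isConj_w_c 1 (by decide), isConj_w_c 2 (by decide)]
  simpa only [Set.image_insert_eq, Set.image_singleton] using
    Subgroup.exists_map_conj_eq_of_mem_image_zpowers hconj
end

section
/- Let G be the subgroup of W generated by (c₄ + c₅, id), (0, (123)), and (c₄, (12)(45)) (the group denoted C₂·S₃ in the paper). Then the centralizer of G in W is exactly the cyclic subgroup of order 4 generated by (c₄, (45)); explicitly, it equals {(0, id), (c₄, (45)), (c₄ + c₅, id), (c₅, (45))}. -/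
/-- The permutation `(12)(45)` (on coordinates labelled `1,…,5`). -/
def τ1245 : Equiv.Perm (Fin 5) := Equiv.swap 0 1 * Equiv.swap 3 4

/-- The transposition `(45)` (on coordinates labelled `1,…,5`). -/
def τ45 : Equiv.Perm (Fin 5) := Equiv.swap 3 4


instance : DecidablePred (· ∈ Dcar) := fun a => decidable_of_iff (a 0 + a 1 + a 2 + a 3 + a 4 = 0) Iff.rfl

theorem Subgroup.mem_zpowers_iff_exists_fin_of_pow_eq_one {G : Type*} [Group G] {g x : G}
    {n : ℕ} (hn : 0 < n) (h : g ^ n = 1) : x ∈ Subgroup.zpowers g ↔ ∃ i : Fin n, x = g ^ (i : ℕ) := by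
  refine ⟨fun ⟨k, hk⟩ => ?_, fun ⟨i, hi⟩ => ⟨i, by simp [hi]⟩⟩
  have h0 := Int.emod_nonneg k (by omega : (n : ℤ) ≠ 0)
  have hlt := Int.emod_lt_of_pos k (by omega : (0 : ℤ) < n)
  refine ⟨⟨(k % n).toNat, by omega⟩, ?_⟩
  rw [← hk, ← zpow_natCast, Int.toNat_of_nonneg h0, ← zpow_eq_zpow_emod' k h]

theorem w_surjective : Function.Surjective (fun p : Dcar × Equiv.Perm (Fin 5) => w p.1 p.2) :=
  fun x => ⟨(Multiplicative.toAdd x.left, x.right), rfl⟩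

theorem w_inj {a b : Dcar} {σ τ : Equiv.Perm (Fin 5)} : w a σ = w b τ ↔ a = b ∧ σ = τ := by
  simp [w, SemidirectProduct.ext_iff]

theorem w_mul_w (a b : Dcar) (σ τ : Equiv.Perm (Fin 5)) :
    w a σ * w b τ = w (a + dperm σ b) (σ * τ) :=
  rfl

theorem commute_w_w_iff {a b : Dcar} {σ τ : Equiv.Perm (Fin 5)} :
    Commute (w a σ) (w b τ) ↔ Commute σ τ ∧ a + dperm σ b = b + dperm τ a := by
  rw [Commute, SemiconjBy, w_mul_w, w_mul_w, w_inj, and_comm]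
  rfl

set_option maxRecDepth 10000 in
theorem eq_one_or_eq_τ45_of_commute {σ : Equiv.Perm (Fin 5)} (h₁ : dperm σ (c 3 + c 4) = c 3 + c 4)
    (h₂ : Commute σ123 σ) (h₃ : Commute τ1245 σ) : σ = 1 ∨ σ = τ45 := by
  revert σ
  unfold Commute SemiconjBy
  decide

theorem commute_generators_iff (a : Dcar) (σ : Equiv.Perm (Fin 5)) :
    (Commute (w (c 3 + c 4) 1) (w a σ) ∧ Commute (w 0 σ123) (w a σ) ∧
        Commute (w (c 3) τ1245) (w a σ)) ↔
      (σ = 1 ∧ (a = 0 ∨ a = c 3 + c 4)) ∨ (σ = τ45 ∧ (a = c 3 ∨ a = c 4)) := by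
  simp only [commute_w_w_iff]
  constructor
  · rintro ⟨⟨-, h₁⟩, ⟨h₂, ha₂⟩, ⟨h₃, ha₃⟩⟩
    have hσ : dperm σ (c 3 + c 4) = c 3 + c 4 := add_left_cancel (h₁.symm.trans (add_comm _ _))
    rcases eq_one_or_eq_τ45_of_commute hσ h₂ h₃ with rfl | rfl
    · revert a; decide
    · revert a; decide
  · rintro (⟨rfl, rfl | rfl⟩ | ⟨rfl, rfl | rfl⟩) <;> unfold Commute SemiconjBy <;> decide

theorem w_zero_one : w 0 1 = 1 := rfl

theorem w_c3_τ45_pow_two : w (c 3) τ45 ^ 2 = w (c 3 + c 4) 1 := by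
  rw [sq, w_mul_w, w_inj]; decide

theorem w_c3_τ45_pow_three : w (c 3) τ45 ^ 3 = w (c 4) τ45 := by
  rw [pow_succ, w_c3_τ45_pow_two, w_mul_w, w_inj]; decide

theorem w_c3_τ45_pow_four : w (c 3) τ45 ^ 4 = 1 := by
  rw [pow_succ, w_c3_τ45_pow_three, w_mul_w, ← w_zero_one, w_inj]; decide

theorem coe_centralizer_generators :
    (Subgroup.centralizer ({w (c 3 + c 4) 1, w 0 σ123, w (c 3) τ1245} : Set W) : Set W) =
      {w 0 1, w (c 3) τ45, w (c 3 + c 4) 1, w (c 4) τ45} := by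
  ext x
  obtain ⟨⟨a, σ⟩, rfl⟩ := w_surjective x
  simp only [SetLike.mem_coe, Subgroup.mem_centralizer_iff, Set.mem_insert_iff,
    Set.mem_singleton_iff, forall_eq_or_imp, forall_eq, w_inj]
  exact (commute_generators_iff a σ).trans (by tauto)

/-- Let `G = ⟨(c₄+c₅, id), (0, (123)), (c₄, (12)(45))⟩ ≤ W`
(the group `C₂·S₃`).  Then the centralizer of `G` in `W` is the cyclic group of
order 4 generated by `(c₄, (45))`; explicitly it is
`{(0, id), (c₄, (45)), (c₄+c₅, id), (c₅, (45))}`. -/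
theorem centralizer_of_C2S3 :
    Subgroup.centralizer
        ((Subgroup.closure ({w (c 3 + c 4) 1, w 0 σ123, w (c 3) τ1245} : Set W) : Subgroup W) : Set W) =
      Subgroup.zpowers (w (c 3) τ45) ∧
    ((Subgroup.centralizer
        ((Subgroup.closure ({w (c 3 + c 4) 1, w 0 σ123, w (c 3) τ1245} : Set W) : Subgroup W) : Set W) : Set W) =
      {w 0 1, w (c 3) τ45, w (c 3 + c 4) 1, w (c 4) τ45}) := by
  rw [Subgroup.centralizer_closure]
  refine ⟨SetLike.coe_injective ?_, coe_centralizer_generators⟩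
  ext x
  rw [coe_centralizer_generators, SetLike.mem_coe,
    Subgroup.mem_zpowers_iff_exists_fin_of_pow_eq_one (by norm_num) w_c3_τ45_pow_four]
  simp [Fin.exists_fin_succ, w_zero_one, w_c3_τ45_pow_two, w_c3_τ45_pow_three]
end

section
/- Let M be the 6×6 integer matrix M = [[-1,0,0,0,-1,-1],[0,-1,0,0,-1,-1],[0,0,-1,0,-1,-1],[-1,-1,-1,-1,-1,-2],[0,0,0,-1,-1,-1],[1,1,1,1,2,3]] acting on ℤ⁶ by matrix-vector multiplication. Then the submodule of fixed vectors {v ∈ ℤ⁶ | M·v = v} is isomorphic to ℤ as a ℤ-module (it is free of rank 1; in fact it is generated by the vector (1,1,1,1,1,−3)). -/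
/-- The matrix of the action of `c₄(45) ∈ W(D₅)` on the Picard lattice of a
quartic del Pezzo surface, with respect to the basis `(E₁,…,E₅,H)`. -/
def M : Matrix (Fin 6) (Fin 6) ℤ :=
  !![-1, 0, 0, 0, -1, -1;
     0, -1, 0, 0, -1, -1;
     0, 0, -1, 0, -1, -1;
     -1, -1, -1, -1, -1, -2;
     0, 0, 0, -1, -1, -1;
     1, 1, 1, 1, 2, 3]

/-!
Written out coordinatewise, `M v = v` is a system of six linear equations over `ℤ` forcing
`v₀ = v₁ = v₂ = v₄ = v₃` and `v₅ = -3 v₃`, so the fixed vectors are exactly `ℤ • w₀` with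
`w₀ = (1,1,1,1,1,-3)`; a cyclic submodule spanned by a nonzero vector of the torsion-free
module `ℤ⁶` is isomorphic to `ℤ`.
-/

open Matrix

local notation "w₀" => (![1, 1, 1, 1, 1, -3] : Fin 6 → ℤ)

theorem Matrix.mem_ker_mulVecLin_sub_id_iff {R n : Type*} [CommRing R] [Fintype n]
    (A : Matrix n n R) (v : n → R) :
    v ∈ LinearMap.ker (A.mulVecLin - LinearMap.id) ↔ A *ᵥ v = v := by
  rw [LinearMap.mem_ker, LinearMap.sub_apply, Matrix.mulVecLin_apply, LinearMap.id_apply,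
    sub_eq_zero]

theorem M_mulVec_w₀ : M *ᵥ w₀ = w₀ := by
  decide

theorem eq_smul_w₀_of_M_mulVec_eq {v : Fin 6 → ℤ} (hv : M *ᵥ v = v) :
    v = v 3 • w₀ := by
  simp [M, funext_iff, Fin.forall_fin_succ, dotProduct, Fin.sum_univ_six] at hv
  obtain ⟨h0, h1, h2, h3, h4, h5⟩ := hv
  funext i
  fin_cases i <;> simp <;> omega

theorem ker_M_sub_id_eq_span :
    LinearMap.ker (M.mulVecLin - LinearMap.id) = Submodule.span ℤ {w₀} := by
  ext v
  rw [Matrix.mem_ker_mulVecLin_sub_id_iff, Submodule.mem_span_singleton]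
  constructor
  · exact fun hv => ⟨v 3, (eq_smul_w₀_of_M_mulVec_eq hv).symm⟩
  · rintro ⟨t, rfl⟩
    rw [mulVec_smul, M_mulVec_w₀]

/-- The submodule of vectors of `ℤ⁶` fixed by `M` is free of
rank one: it is isomorphic to `ℤ` as a `ℤ`-module, and is generated by the
vector `(1,1,1,1,1,-3)`. -/
theorem fixed_submodule_isomorphic_to_int :
    Nonempty
      ((LinearMap.ker (M.mulVecLin - LinearMap.id) : Submodule ℤ (Fin 6 → ℤ)) ≃ₗ[ℤ] ℤ) ∧
    (LinearMap.ker (M.mulVecLin - LinearMap.id) : Submodule ℤ (Fin 6 → ℤ)) =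
      Submodule.span ℤ {![1, 1, 1, 1, 1, -3]} := by
  refine ⟨?_, ker_M_sub_id_eq_span⟩
  rw [ker_M_sub_id_eq_span]
  exact ⟨(LinearEquiv.toSpanNonzeroSingleton ℤ (Fin 6 → ℤ) _ (by decide)).symm⟩
end

section
/- Let k be a field of characteristic zero, let PGL₂(k) denote the quotient of the group GL₂(k) of invertible 2×2 matrices over k by its center, and let n be a positive integer. The following are equivalent: (a) PGL₂(k) contains an element of order n; (b) PGL₂(k) contains a subgroup isomorphic to the dihedral group of order 2n; (c) there exists a primitive n-th root of unity ζ in an algebraic closure of k such that ζ + ζ⁻¹ lies in (the image of) k. -/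
/-- `PGL₂(k)`: the quotient of `GL₂(k)` by its center. -/
abbrev PGL2 (k : Type*) [Field k] :=
  Matrix.GeneralLinearGroup (Fin 2) k ⧸
    Subgroup.center (Matrix.GeneralLinearGroup (Fin 2) k)

/-!
Lift `g ∈ PGL₂(k)` to `M ∈ GL₂(k)` and let `α, β` be the eigenvalues of `M` in `k̄`. A non-scalar
`2 × 2` matrix has its characteristic polynomial as minimal polynomial, so `Mᵐ` is scalar iff
`(X - α)(X - β) ∣ Xᵐ - c` for some `c`. For `α ≠ β` this says `(α / β)ᵐ = 1`, so `g` and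
`ζ = α / β` have the same order; for `α = β` and `M` non-scalar, differentiating shows that no
power of `M` is scalar in characteristic zero. Moreover `ζ + ζ⁻¹ = (tr² - 2 det) / det ∈ k`.

Conversely, a dihedral group is generated by `a` of order `n` and `b` with `b² = (ba)² = 1`,
`b ∉ ⟨a⟩`. If `ζ ∈ k`, take `a = diag(ζ, 1)` and `b` the swap. Otherwise `s = ζ + ζ⁻¹ + 2 ≠ 0`,
and `a` is the companion matrix of `X² - sX + s = (X - (1 + ζ))(X - (1 + ζ⁻¹))`, whose eigenvalue
ratio is `ζ`, with `b = !![1, s; 0, -1]`; here `b ∈ ⟨a⟩` would force `a² = 1`, i.e. `ζ² = 1`.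
-/

open Polynomial

namespace Matrix

theorem mem_range_scalar_fin_two_iff {R : Type*} [CommRing R] (A : Matrix (Fin 2) (Fin 2) R) :
    A ∈ Set.range (scalar (Fin 2)) ↔ A 0 1 = 0 ∧ A 1 0 = 0 ∧ A 0 0 = A 1 1 := by
  constructor
  · rintro ⟨c, rfl⟩
    simp
  · rintro ⟨h01, h10, h00⟩
    refine ⟨A 0 0, ?_⟩
    ext i j
    fin_cases i <;> fin_cases j <;> simp [h01, h10, h00]

theorem map_mem_range_scalar_iff {n R S : Type*} [Fintype n] [DecidableEq n] [Nonempty n]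
    [CommRing R] [CommRing S] {f : R →+* S} (hf : Function.Injective f) (A : Matrix n n R) :
    A.map f ∈ Set.range (scalar n) ↔ A ∈ Set.range (scalar n) := by
  refine ⟨fun ⟨c, hc⟩ ↦ ?_, fun ⟨c, hc⟩ ↦ ⟨f c, by simp [← hc]⟩⟩
  obtain ⟨i₀⟩ := ‹Nonempty n›
  have hA : ∀ i j, f (A i j) = if i = j then c else 0 := fun i j ↦ by
    simpa [diagonal_apply, eq_comm] using congr_fun₂ hc i j
  refine ⟨A i₀ i₀, ext fun i j ↦ hf ?_⟩
  rw [hA, scalar_apply, diagonal_apply]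
  split_ifs <;> simp [hA]

variable {K : Type*} [Field K] {A : Matrix (Fin 2) (Fin 2) K}

theorem charpoly_scalar_fin_two (c : K) : (scalar (Fin 2) c).charpoly = (X - C c) ^ 2 := by
  simp [scalar_apply, charpoly_diagonal, sq]

theorem charpoly_eq_X_sub_C_mul_X_sub_C_iff {α β : K} :
    A.charpoly = (X - C α) * (X - C β) ↔ A.trace = α + β ∧ A.det = α * β := by
  have hαβ : (X - C α) * (X - C β) = X ^ 2 - C (α + β) * X + C (α * β) := by
    rw [C_add, C_mul]
    ring
  rw [charpoly_fin_two, hαβ]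
  refine ⟨fun h ↦ ?_, fun ⟨htr, hdet⟩ ↦ by rw [htr, hdet]⟩
  have h₀ := congrArg (eval 0) h
  have h₁ := congrArg (eval 1) h
  simp only [eval_add, eval_sub, eval_mul, eval_pow, eval_X, eval_C] at h₀ h₁
  exact ⟨by linear_combination h₀ - h₁, by linear_combination h₀⟩

theorem exists_charpoly_eq_X_sub_C_mul_X_sub_C [IsAlgClosed K] (A : Matrix (Fin 2) (Fin 2) K) :
    ∃ α β : K, A.charpoly = (X - C α) * (X - C β) := by
  have hsplits : A.charpoly.Splits := IsAlgClosed.splits _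
  obtain ⟨α, β, hroots⟩ : ∃ α β, A.charpoly.roots = {α, β} := by
    apply Multiset.card_eq_two.mp
    rw [splits_iff_card_roots.mp hsplits, charpoly_natDegree_eq_dim, Fintype.card_fin]
  refine ⟨α, β, ?_⟩
  simpa [hroots] using hsplits.eq_prod_roots_of_monic A.charpoly_monic

theorem minpoly_eq_charpoly_of_notMem_range_scalar (hA : A ∉ Set.range (scalar (Fin 2))) :
    minpoly K A = A.charpoly := by
  have hmonic := minpoly.monic A.isIntegral
  refine (eq_of_monic_of_dvd_of_natDegree_le hmonic A.charpoly_monic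
    (minpoly_dvd_charpoly A) ?_).symm
  rw [charpoly_natDegree_eq_dim, Fintype.card_fin]
  by_contra! hdeg
  have h1 : (minpoly K A).natDegree = 1 := by
    have := minpoly.natDegree_pos A.isIntegral
    omega
  have hroot := minpoly.aeval K A
  rw [hmonic.eq_X_add_C h1, map_add, aeval_X, aeval_C, add_eq_zero_iff_eq_neg, ← map_neg] at hroot
  exact hA ⟨_, hroot.symm⟩

theorem pow_mem_range_scalar_iff_charpoly_dvd (hA : A ∉ Set.range (scalar (Fin 2))) (m : ℕ) :
    A ^ m ∈ Set.range (scalar (Fin 2)) ↔ ∃ c, A.charpoly ∣ X ^ m - C c := by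
  simp only [← minpoly_eq_charpoly_of_notMem_range_scalar hA, minpoly.dvd_iff, map_sub, map_pow,
    aeval_X, aeval_C, sub_eq_zero, Set.mem_range, eq_comm (b := A ^ m)]
  -- `algebraMap K (Matrix (Fin 2) (Fin 2) K)` unfolds to `scalar (Fin 2)`
  rfl

theorem pow_mem_range_scalar_iff_of_charpoly_eq {α β : K}
    (h : A.charpoly = (X - C α) * (X - C β)) (hαβ : α ≠ β) (m : ℕ) :
    A ^ m ∈ Set.range (scalar (Fin 2)) ↔ α ^ m = β ^ m := by
  have hA : A ∉ Set.range (scalar (Fin 2)) := by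
    rintro ⟨c, rfl⟩
    rw [charpoly_scalar_fin_two] at h
    have hα := congrArg (eval α) h
    have hβ := congrArg (eval β) h
    simp only [eval_pow, eval_mul, eval_sub, eval_X, eval_C, sub_self, zero_mul, mul_zero,
      pow_eq_zero_iff two_ne_zero, sub_eq_zero] at hα hβ
    exact hαβ (hα.trans hβ.symm)
  have hcop := isCoprime_X_sub_C_of_isUnit_sub (sub_ne_zero.mpr hαβ).isUnit
  rw [pow_mem_range_scalar_iff_charpoly_dvd hA, h]
  constructor
  · rintro ⟨c, hc⟩
    have hα := dvd_iff_isRoot.mp (dvd_of_mul_right_dvd hc)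
    have hβ := dvd_iff_isRoot.mp (dvd_of_mul_left_dvd hc)
    simp only [IsRoot, eval_sub, eval_pow, eval_X, eval_C, sub_eq_zero] at hα hβ
    exact hα.trans hβ.symm
  · intro hm
    refine ⟨α ^ m, hcop.mul_dvd ?_ ?_⟩ <;> simp [dvd_iff_isRoot, hm]

theorem pow_notMem_range_scalar_of_charpoly_eq_sq [CharZero K] {α : K}
    (hA : A ∉ Set.range (scalar (Fin 2))) (h : A.charpoly = (X - C α) ^ 2) (hα : α ≠ 0)
    {m : ℕ} (hm : m ≠ 0) : A ^ m ∉ Set.range (scalar (Fin 2)) := by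
  rw [pow_mem_range_scalar_iff_charpoly_dvd hA, h]
  rintro ⟨c, hc⟩
  have hder := dvd_iff_isRoot.mp (pow_one (X - C α) ▸ pow_sub_one_dvd_derivative_of_pow_dvd hc)
  simp [derivative_X_pow, hm, hα] at hder

end Matrix

section DihedralRelations

variable {G : Type*} [Group G] {a b : G}

theorem pow_val_add_of_pow_eq_one {n : ℕ} [NeZero n] (ha : a ^ n = 1) (i j : ZMod n) :
    a ^ (i + j).val = a ^ i.val * a ^ j.val := by
  rw [← pow_add, pow_eq_pow_iff_modEq, ZMod.val_add]
  exact (Nat.mod_modEq _ n).of_dvd (orderOf_dvd_of_pow_eq_one ha)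

theorem pow_val_neg_of_pow_eq_one {n : ℕ} [NeZero n] (ha : a ^ n = 1) (i : ZMod n) :
    a ^ (-i).val = (a ^ i.val)⁻¹ := by
  rw [eq_inv_iff_mul_eq_one, ← pow_val_add_of_pow_eq_one ha, neg_add_cancel, ZMod.val_zero,
    pow_zero]

theorem mul_pow_mul_eq_inv (hb : b ^ 2 = 1) (hab : (b * a) ^ 2 = 1) (m : ℕ) :
    b * a ^ m * b = (a ^ m)⁻¹ := by
  have hb_inv : b⁻¹ = b := by rw [inv_eq_iff_mul_eq_one, ← sq, hb]
  have hbab : b * a * b⁻¹ = a⁻¹ := by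
    rw [hb_inv, eq_inv_iff_mul_eq_one, ← hab, sq, ← mul_assoc]
  calc b * a ^ m * b = (b * a * b⁻¹) ^ m := by rw [conj_pow, hb_inv]
    _ = (a ^ m)⁻¹ := by rw [hbab, inv_pow]

theorem sq_eq_one_of_mem_zpowers (hb : b ^ 2 = 1) (hab : (b * a) ^ 2 = 1)
    (hba : b ∈ Subgroup.zpowers a) : a ^ 2 = 1 := by
  obtain ⟨j, rfl⟩ := Subgroup.mem_zpowers_iff.mp hba
  rwa [(Commute.zpow_left (Commute.refl a) j).mul_pow, hb, one_mul] at hab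

end DihedralRelations

namespace DihedralGroup

variable {G : Type*} [Group G] {n : ℕ} [NeZero n] {a b : G}

def lift (ha : a ^ n = 1) (hb : b ^ 2 = 1) (hab : (b * a) ^ 2 = 1) : DihedralGroup n →* G where
  toFun
    | r i => a ^ i.val
    | sr i => b * a ^ i.val
  map_one' := by simp only [one_def, ZMod.val_zero, pow_zero]
  map_mul' := by
    have hbb : b * b = 1 := by rw [← sq, hb]
    rintro (i | i) (j | j)
    · simp only [r_mul_r, pow_val_add_of_pow_eq_one ha]
    · simp only [r_mul_sr, sub_eq_neg_add, pow_val_add_of_pow_eq_one ha,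
        pow_val_neg_of_pow_eq_one ha, ← mul_pow_mul_eq_inv hb hab, ← mul_assoc, hbb, one_mul]
    · simp only [sr_mul_r, pow_val_add_of_pow_eq_one ha, mul_assoc]
    · simp only [sr_mul_sr, sub_eq_neg_add, pow_val_add_of_pow_eq_one ha,
        pow_val_neg_of_pow_eq_one ha, ← mul_pow_mul_eq_inv hb hab, ← mul_assoc]

theorem lift_injective (ha : orderOf a = n) (hb : b ^ 2 = 1) (hab : (b * a) ^ 2 = 1)
    (hba : b ∉ Subgroup.zpowers a) :
    Function.Injective (lift (ha ▸ pow_orderOf_eq_one a) hb hab) := by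
  rw [injective_iff_map_eq_one]
  rintro (i | i) h
  · change a ^ i.val = 1 at h
    rw [← orderOf_dvd_iff_pow_eq_one, ha] at h
    rw [one_def, (ZMod.val_eq_zero i).mp (Nat.eq_zero_of_dvd_of_lt h (ZMod.val_lt i))]
  · change b * a ^ i.val = 1 at h
    exact absurd (eq_inv_of_mul_eq_one_left h ▸ inv_mem (Subgroup.npow_mem_zpowers a _)) hba

end DihedralGroup

theorem exists_subgroup_mulEquiv_dihedralGroup {G : Type*} [Group G] {n : ℕ} [NeZero n]
    {a b : G} (ha : orderOf a = n) (hb : b ^ 2 = 1) (hab : (b * a) ^ 2 = 1)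
    (hba : b ∉ Subgroup.zpowers a) : ∃ H : Subgroup G, Nonempty (H ≃* DihedralGroup n) :=
  ⟨_, ⟨(MonoidHom.ofInjective (DihedralGroup.lift_injective ha hb hab hba)).symm⟩⟩

open Matrix

namespace PGL2

variable {k : Type*} [Field k] {K : Type*} [Field K] [Algebra k K]

theorem mk_eq_one_iff (M : GL (Fin 2) k) :
    (M : PGL2 k) = 1 ↔ (M : Matrix (Fin 2) (Fin 2) k) ∈ Set.range (scalar (Fin 2)) := by
  rw [QuotientGroup.eq_one_iff, GeneralLinearGroup.mem_center_iff_val_mem_range_scalar]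

theorem mk_pow_eq_one_iff (M : GL (Fin 2) k) (m : ℕ) :
    (M : PGL2 k) ^ m = 1 ↔ (M : Matrix (Fin 2) (Fin 2) k) ^ m ∈ Set.range (scalar (Fin 2)) := by
  rw [← QuotientGroup.mk_pow, mk_eq_one_iff, Units.val_pow_eq_pow_val]

theorem mk_pow_eq_one_iff_map (M : GL (Fin 2) k) (m : ℕ) :
    (M : PGL2 k) ^ m = 1 ↔
      (M : Matrix (Fin 2) (Fin 2) k).map (algebraMap k K) ^ m ∈ Set.range (scalar (Fin 2)) := by
  rw [mk_pow_eq_one_iff, ← Matrix.map_pow, map_mem_range_scalar_iff (algebraMap k K).injective]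

theorem mul_ne_zero_of_charpoly_map_eq (M : GL (Fin 2) k) {α β : K}
    (h : ((M : Matrix (Fin 2) (Fin 2) k).map (algebraMap k K)).charpoly = (X - C α) * (X - C β)) :
    α * β ≠ 0 := by
  rw [← (charpoly_eq_X_sub_C_mul_X_sub_C_iff.mp h).2, ← RingHom.mapMatrix_apply,
    ← RingHom.map_det]
  exact (_root_.map_ne_zero _).mpr (M.isUnit.map detMonoidHom).ne_zero

theorem orderOf_mk_eq_orderOf_div_of_ne (M : GL (Fin 2) k) {α β : K}
    (h : ((M : Matrix (Fin 2) (Fin 2) k).map (algebraMap k K)).charpoly = (X - C α) * (X - C β))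
    (hαβ : α ≠ β) : orderOf (M : PGL2 k) = orderOf (α / β) := by
  have hβ : β ≠ 0 := right_ne_zero_of_mul (mul_ne_zero_of_charpoly_map_eq M h)
  refine orderOf_eq_orderOf_iff.mpr fun m ↦ ?_
  rw [mk_pow_eq_one_iff_map (K := K), pow_mem_range_scalar_iff_of_charpoly_eq h hαβ, div_pow,
    div_eq_one_iff_eq (pow_ne_zero m hβ)]

theorem mk_eq_one_of_charpoly_map_eq_sq [CharZero K] (M : GL (Fin 2) k) {α : K}
    (h : ((M : Matrix (Fin 2) (Fin 2) k).map (algebraMap k K)).charpoly = (X - C α) ^ 2)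
    (hM : IsOfFinOrder (M : PGL2 k)) : (M : PGL2 k) = 1 := by
  by_contra hne
  have hα : α ≠ 0 := left_ne_zero_of_mul (mul_ne_zero_of_charpoly_map_eq M (sq (X - C α) ▸ h))
  have hA : (M : Matrix (Fin 2) (Fin 2) k).map (algebraMap k K) ∉ Set.range (scalar (Fin 2)) := by
    rwa [map_mem_range_scalar_iff (algebraMap k K).injective, ← mk_eq_one_iff]
  exact pow_notMem_range_scalar_of_charpoly_eq_sq hA h hα hM.orderOf_pos.ne'
    ((mk_pow_eq_one_iff_map M _).mp (pow_orderOf_eq_one _))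

theorem orderOf_mk_eq_orderOf_div [CharZero K] (M : GL (Fin 2) k) {α β : K}
    (h : ((M : Matrix (Fin 2) (Fin 2) k).map (algebraMap k K)).charpoly = (X - C α) * (X - C β))
    (hM : IsOfFinOrder (M : PGL2 k)) : orderOf (M : PGL2 k) = orderOf (α / β) := by
  rcases eq_or_ne α β with rfl | hαβ
  · have hα : α ≠ 0 := left_ne_zero_of_mul (mul_ne_zero_of_charpoly_map_eq M h)
    rw [mk_eq_one_of_charpoly_map_eq_sq M (sq (X - C α) ▸ h) hM, div_self hα, orderOf_one,
      orderOf_one]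
  · exact orderOf_mk_eq_orderOf_div_of_ne M h hαβ

theorem div_add_inv_mem_range_of_charpoly_map_eq (M : GL (Fin 2) k) {α β : K}
    (h : ((M : Matrix (Fin 2) (Fin 2) k).map (algebraMap k K)).charpoly = (X - C α) * (X - C β)) :
    α / β + (α / β)⁻¹ ∈ (algebraMap k K).range := by
  set A := (M : Matrix (Fin 2) (Fin 2) k)
  have hαβ := mul_ne_zero_of_charpoly_map_eq M h
  obtain ⟨htr, hdet⟩ := charpoly_eq_X_sub_C_mul_X_sub_C_iff.mp h
  refine ⟨(A.trace ^ 2 - 2 * A.det) / A.det, ?_⟩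
  rw [← AddMonoidHom.map_trace] at htr
  rw [← RingHom.mapMatrix_apply, ← RingHom.map_det] at hdet
  simp only [map_div₀, map_sub, map_pow, map_mul, map_ofNat, htr, hdet]
  field_simp
  ring

theorem exists_isPrimitiveRoot_orderOf [IsAlgClosed K] [CharZero K] {g : PGL2 k}
    (hg : IsOfFinOrder g) :
    ∃ ζ : K, IsPrimitiveRoot ζ (orderOf g) ∧ ζ + ζ⁻¹ ∈ (algebraMap k K).range := by
  obtain ⟨M, rfl⟩ := QuotientGroup.mk_surjective g
  obtain ⟨α, β, h⟩ := exists_charpoly_eq_X_sub_C_mul_X_sub_C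
    ((M : Matrix (Fin 2) (Fin 2) k).map (algebraMap k K))
  refine ⟨α / β, IsPrimitiveRoot.iff_orderOf.mpr ?_, div_add_inv_mem_range_of_charpoly_map_eq M h⟩
  exact (orderOf_mk_eq_orderOf_div M h hg).symm

theorem exists_dihedralGroup_of_isPrimitiveRoot {n : ℕ} [NeZero n] {z : k}
    (hz : IsPrimitiveRoot z n) : ∃ H : Subgroup (PGL2 k), Nonempty (H ≃* DihedralGroup n) := by
  obtain ⟨D, hD⟩ : ∃ D : GL (Fin 2) k, (D : Matrix (Fin 2) (Fin 2) k) = !![z, 0; 0, 1] :=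
    ⟨.mkOfDetNeZero _ (by simpa using hz.ne_zero (NeZero.ne n)), rfl⟩
  obtain ⟨S, hS⟩ : ∃ S : GL (Fin 2) k, (S : Matrix (Fin 2) (Fin 2) k) = !![0, 1; 1, 0] :=
    ⟨.mkOfDetNeZero _ (by simp), rfl⟩
  have hD_pow (m : ℕ) : (D : Matrix (Fin 2) (Fin 2) k) ^ m = !![z ^ m, 0; 0, 1] := by
    induction m with
    | zero => simp [one_fin_two]
    | succ m ih => rw [pow_succ, ih, hD, mul_fin_two]; simp [pow_succ]
  have ha : orderOf (D : PGL2 k) = n := by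
    rw [hz.eq_orderOf, orderOf_eq_orderOf_iff]
    intro m
    rw [mk_pow_eq_one_iff, hD_pow, mem_range_scalar_fin_two_iff]
    simp
  have hb : (S : PGL2 k) ^ 2 = 1 := by
    rw [mk_pow_eq_one_iff, mem_range_scalar_fin_two_iff]
    simp [sq, hS]
  refine exists_subgroup_mulEquiv_dihedralGroup ha hb ?_ fun hmem ↦ ?_
  · rw [← QuotientGroup.mk_mul, mk_pow_eq_one_iff, mem_range_scalar_fin_two_iff]
    simp [sq, hS, hD]
  · have hfin : IsOfFinOrder (D : PGL2 k) := orderOf_pos_iff.mp (ha ▸ NeZero.pos n)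
    obtain ⟨m, hm⟩ : ∃ m : ℕ, (D : PGL2 k) ^ m = S := hfin.mem_powers_iff_mem_zpowers.mpr hmem
    have h1 : ((D ^ m * S : GL (Fin 2) k) : PGL2 k) = 1 := by
      rw [QuotientGroup.mk_mul, QuotientGroup.mk_pow, hm, ← sq, hb]
    rw [mk_eq_one_iff, Units.val_mul, Units.val_pow_eq_pow_val, hD_pow, hS,
      mem_range_scalar_fin_two_iff] at h1
    simp at h1

def companion (s : k) (hs : s ≠ 0) : GL (Fin 2) k :=
  .mkOfDetNeZero !![0, -s; 1, s] (by simpa [det_fin_two] using hs)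

def reflection (s : k) : GL (Fin 2) k :=
  .mkOfDetNeZero !![1, s; 0, -1] (by simp [det_fin_two])

theorem reflection_sq (s : k) : (reflection s : PGL2 k) ^ 2 = 1 := by
  rw [mk_pow_eq_one_iff, mem_range_scalar_fin_two_iff]
  simp [reflection, sq]

theorem reflection_mul_companion_sq {s : k} (hs : s ≠ 0) :
    ((reflection s : PGL2 k) * companion s hs) ^ 2 = 1 := by
  rw [← QuotientGroup.mk_mul, mk_pow_eq_one_iff, mem_range_scalar_fin_two_iff]
  simp [reflection, companion, sq, mul_comm]

theorem charpoly_map_companion {s : k} (hs : s ≠ 0) {α β : K} (hadd : algebraMap k K s = α + β)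
    (hmul : algebraMap k K s = α * β) :
    ((companion s hs : Matrix (Fin 2) (Fin 2) k).map (algebraMap k K)).charpoly =
      (X - C α) * (X - C β) := by
  rw [charpoly_eq_X_sub_C_mul_X_sub_C_iff, trace_fin_two, det_fin_two]
  simp [companion, hadd, ← hmul]

theorem exists_dihedralGroup_of_isPrimitiveRoot_of_notMem_range {n : ℕ} [NeZero n] {ζ : K}
    (hζ : IsPrimitiveRoot ζ n) (hζk : ζ ∉ (algebraMap k K).range)
    (hc : ζ + ζ⁻¹ ∈ (algebraMap k K).range) :
    ∃ H : Subgroup (PGL2 k), Nonempty (H ≃* DihedralGroup n) := by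
  obtain ⟨c, hc⟩ := hc
  have hζ0 : ζ ≠ 0 := hζ.ne_zero (NeZero.ne n)
  have hsq : ζ ^ 2 ≠ 1 := fun h ↦ hζk <| by
    rcases mul_self_eq_one_iff.mp (sq ζ ▸ h) with rfl | rfl
    exacts [⟨1, map_one _⟩, ⟨-1, by simp⟩]
  have hζ1 : 1 + ζ ≠ 0 := fun h ↦ hsq (by rw [eq_neg_of_add_eq_zero_right h]; norm_num)
  have hζ1' : 1 + ζ⁻¹ ≠ 0 := fun h ↦ hζ1 (by
    rw [← inv_inv ζ, eq_neg_of_add_eq_zero_right h, inv_neg, inv_one, add_neg_cancel])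
  have hne : 1 + ζ ≠ 1 + ζ⁻¹ := fun h ↦ hsq (by
    rw [sq]; nth_rewrite 2 [add_left_cancel h]; exact mul_inv_cancel₀ hζ0)
  have hratio : (1 + ζ) / (1 + ζ⁻¹) = ζ := by
    rw [div_eq_iff hζ1', mul_add, mul_inv_cancel₀ hζ0, mul_one, add_comm]
  set s := c + 2
  have hs_add : algebraMap k K s = (1 + ζ) + (1 + ζ⁻¹) := by
    simp only [s, map_add, hc, map_ofNat]
    ring
  have hs_mul : algebraMap k K s = (1 + ζ) * (1 + ζ⁻¹) := by
    rw [hs_add]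
    linear_combination -mul_inv_cancel₀ hζ0
  have hs0 : s ≠ 0 := fun h ↦ mul_ne_zero hζ1 hζ1' (by rw [← hs_mul, h, map_zero])
  have ha : orderOf (companion s hs0 : PGL2 k) = n := by
    rw [orderOf_mk_eq_orderOf_div_of_ne _ (charpoly_map_companion hs0 hs_add hs_mul) hne, hratio,
      hζ.eq_orderOf]
  refine exists_subgroup_mulEquiv_dihedralGroup ha (reflection_sq s)
    (reflection_mul_companion_sq hs0) fun hmem ↦ hsq ?_
  have := orderOf_dvd_of_pow_eq_one
    (sq_eq_one_of_mem_zpowers (reflection_sq s) (reflection_mul_companion_sq hs0) hmem)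
  rwa [ha, ← hζ.pow_eq_one_iff_dvd] at this

theorem exists_dihedralGroup_of_isPrimitiveRoot_of_add_inv_mem_range {n : ℕ} [NeZero n] {ζ : K}
    (hζ : IsPrimitiveRoot ζ n) (hc : ζ + ζ⁻¹ ∈ (algebraMap k K).range) :
    ∃ H : Subgroup (PGL2 k), Nonempty (H ≃* DihedralGroup n) := by
  by_cases hζk : ζ ∈ (algebraMap k K).range
  · obtain ⟨z, rfl⟩ := hζk
    exact exists_dihedralGroup_of_isPrimitiveRoot (hζ.of_map_of_injective (algebraMap k K).injective)
  · exact exists_dihedralGroup_of_isPrimitiveRoot_of_notMem_range hζ hζk hc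

end PGL2

/-- For a field `k` of characteristic zero and `n > 0`, the
following are equivalent: (a) `PGL₂(k)` contains an element of order `n`;
(b) `PGL₂(k)` contains a subgroup isomorphic to the dihedral group of order
`2n`; (c) there is a primitive `n`-th root of unity `ζ` in the algebraic
closure of `k` with `ζ + ζ⁻¹ ∈ k`. -/
theorem pgl2_contains_Cn_and_Dn_iff (k : Type*) [Field k] [CharZero k]
    (n : ℕ) (hn : 0 < n) :
    List.TFAE
      [∃ g : PGL2 k, orderOf g = n,
       ∃ H : Subgroup (PGL2 k), Nonempty (H ≃* DihedralGroup n),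
       ∃ ζ : AlgebraicClosure k, IsPrimitiveRoot ζ n ∧
          ζ + ζ⁻¹ ∈ (algebraMap k (AlgebraicClosure k)).range] := by
  have : NeZero n := ⟨hn.ne'⟩
  tfae_have 2 → 1 := fun ⟨H, ⟨e⟩⟩ ↦ ⟨e.symm (DihedralGroup.r 1), by
    rw [Subgroup.orderOf_coe, MulEquiv.orderOf_eq, DihedralGroup.orderOf_r_one]⟩
  tfae_have 1 → 3 := fun ⟨g, hg⟩ ↦
    hg ▸ PGL2.exists_isPrimitiveRoot_orderOf (orderOf_pos_iff.mp (hg ▸ hn))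
  tfae_have 3 → 2 := fun ⟨ζ, hζ, hc⟩ ↦
    PGL2.exists_dihedralGroup_of_isPrimitiveRoot_of_add_inv_mem_range hζ hc
  tfae_finish
end

section
/- Let k be a field of characteristic zero and let PGL₂(k) denote the quotient of GL₂(k) by its center. Then PGL₂(k) contains an element of order 5 if and only if there exists x ∈ k with x² = 5. -/
open Matrix

namespace Matrix

-- Iterating `M ^ 2 = t • M - d • 1` gives `M ^ n = u n • M - (d * u (n - 1)) • 1`, where
-- `u 1 = 1`, `u 2 = t` and `u (n + 1) = t * u n - d * u (n - 1)`.
theorem pow_five_fin_two {R : Type*} [CommRing R] (M : Matrix (Fin 2) (Fin 2) R) :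
    M ^ 5 = (M.trace ^ 4 - 3 * M.trace ^ 2 * M.det + M.det ^ 2) • M
      - (M.det * (M.trace ^ 3 - 2 * M.trace * M.det)) • 1 := by
  rw [eta_fin_two M]
  ext i j
  fin_cases i <;> fin_cases j <;>
    simp [pow_succ, trace_fin_two, det_fin_two] <;> ring

theorem pow_five_mem_range_scalar_iff {K : Type*} [Field K] {M : Matrix (Fin 2) (Fin 2) K}
    (hM : M ∉ Set.range (scalar (Fin 2))) :
    M ^ 5 ∈ Set.range (scalar (Fin 2)) ↔
      M.trace ^ 4 - 3 * M.trace ^ 2 * M.det + M.det ^ 2 = 0 := by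
  simp only [Set.mem_range, scalar_apply, ← smul_one_eq_diagonal] at hM ⊢
  rw [pow_five_fin_two]
  set p := M.trace ^ 4 - 3 * M.trace ^ 2 * M.det + M.det ^ 2
  set q := M.det * (M.trace ^ 3 - 2 * M.trace * M.det)
  constructor
  · rintro ⟨c, hc⟩
    by_contra hp
    have hpM : p • M = (c + q) • 1 := by rw [add_smul c, hc, sub_add_cancel]
    exact hM ⟨p⁻¹ * (c + q), by rw [mul_smul, ← hpM, inv_smul_smul₀ hp]⟩
  · intro hp
    exact ⟨-q, by rw [hp, zero_smul, zero_sub, neg_smul]⟩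

end Matrix

theorem orderOf_mk_eq_five_iff {k : Type*} [Field k] (A : GL (Fin 2) k) :
    orderOf (A : PGL2 k) = 5 ↔ (A : Matrix (Fin 2) (Fin 2) k) ∉ Set.range (scalar (Fin 2)) ∧
      (A : Matrix (Fin 2) (Fin 2) k).trace ^ 4
        - 3 * (A : Matrix (Fin 2) (Fin 2) k).trace ^ 2 * (A : Matrix (Fin 2) (Fin 2) k).det
        + (A : Matrix (Fin 2) (Fin 2) k).det ^ 2 = 0 := by
  have : Fact (Nat.Prime 5) := ⟨by norm_num⟩
  simp only [orderOf_eq_prime_iff, ← QuotientGroup.mk_pow, ne_eq, QuotientGroup.eq_one_iff,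
    GeneralLinearGroup.mem_center_iff_val_mem_range_scalar, Units.val_pow_eq_pow_val]
  constructor
  · rintro ⟨h5, h1⟩
    exact ⟨h1, (pow_five_mem_range_scalar_iff h1).1 h5⟩
  · rintro ⟨h1, hp⟩
    exact ⟨(pow_five_mem_range_scalar_iff h1).2 hp, h1⟩

theorem exists_nonscalar_GL_fin_two {k : Type*} [Field k] (t d : k) (hd : d ≠ 0) :
    ∃ A : GL (Fin 2) k, (A : Matrix (Fin 2) (Fin 2) k) ∉ Set.range (scalar (Fin 2)) ∧
      (A : Matrix (Fin 2) (Fin 2) k).trace = t ∧ (A : Matrix (Fin 2) (Fin 2) k).det = d := by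
  refine ⟨GeneralLinearGroup.mkOfDetNeZero !![0, -d; 1, t] (by simpa [det_fin_two]), ?_,
    by simp [trace_fin_two], by simp [det_fin_two]⟩
  rintro ⟨c, hc⟩
  simpa using congrFun₂ hc 1 0

theorem exists_sq_eq_five_iff {k : Type*} [Field k] (h2 : (2 : k) ≠ 0) :
    (∃ x : k, x ^ 2 = 5) ↔ ∃ t d : k, d ≠ 0 ∧ t ^ 4 - 3 * t ^ 2 * d + d ^ 2 = 0 := by
  constructor
  · rintro ⟨x, hx⟩
    -- the trace `2 cos (π / 5) = (1 + √5) / 2` of a rotation by `π / 5`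
    refine ⟨(1 + x) / 2, 1, one_ne_zero, ?_⟩
    field_simp
    linear_combination (x ^ 2 + 4 * x - 1) * hx
  · rintro ⟨t, d, hd, hp⟩
    refine ⟨(2 * t ^ 2 - 3 * d) / d, ?_⟩
    field_simp
    linear_combination 4 * hp

/-- For a field `k` of characteristic zero, `PGL₂(k)`
contains an element of order 5 if and only if `5` is a square in `k`. -/
theorem pgl2_order_five_iff_sqrt5 (k : Type*) [Field k] [CharZero k] :
    (∃ g : PGL2 k, orderOf g = 5) ↔ ∃ x : k, x ^ 2 = 5 := by
  rw [exists_sq_eq_five_iff two_ne_zero]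
  constructor
  · rintro ⟨g, hg⟩
    obtain ⟨A, rfl⟩ := QuotientGroup.mk_surjective g
    exact ⟨_, _, A.det_ne_zero, ((orderOf_mk_eq_five_iff A).1 hg).2⟩
  · rintro ⟨t, d, hd, hp⟩
    obtain ⟨A, hA, rfl, rfl⟩ := exists_nonscalar_GL_fin_two t d hd
    exact ⟨A, (orderOf_mk_eq_five_iff A).2 ⟨hA, hp⟩⟩
end

section
/- Let k be a field of characteristic zero in which −1 is not a square (there is no x ∈ k with x² = −1). Let h be an invertible 2×2 matrix over k such that h⁴ is a scalar matrix but h² is not a scalar matrix (i.e. the image of h in PGL₂(k) has order 4). Then the characteristic polynomial of h has no root in k; equivalently, it is irreducible over k. -/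
/-!
By Cayley–Hamilton, a `2 × 2` matrix with trace `t` and determinant `d` satisfies
`M⁴ = t (t² - 2d) M + (d² - t² d)`. If `M⁴` is scalar and `M` is not, then `t (t² - 2d) = 0`;
and `t ≠ 0`, since otherwise `M² = -d` would be scalar. Hence `t² = 2d`, so the characteristic
polynomial has discriminant `t² - 4d = -t²`, and a root `x` would give `((2x - t) / t)² = -1`.
-/

open Polynomial

namespace Matrix

section CommRing

variable {R : Type*} [CommRing R] [Nontrivial R] (M : Matrix (Fin 2) (Fin 2) R)

theorem sq_eq_trace_smul_sub_det_smul_fin_two : M ^ 2 = M.trace • M - M.det • 1 := by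
  have hCH := M.aeval_self_charpoly
  rw [charpoly_fin_two] at hCH
  simp only [map_add, map_sub, map_mul, map_pow, aeval_X, aeval_C,
    Algebra.algebraMap_eq_smul_one, smul_mul_assoc, one_mul] at hCH
  rw [eq_sub_iff_add_eq, ← sub_eq_zero, ← hCH]
  abel

theorem pow_four_eq_fin_two :
    M ^ 4 = (M.trace * (M.trace ^ 2 - 2 * M.det)) • M
      + (M.det ^ 2 - M.trace ^ 2 * M.det) • 1 := by
  have hsq := M.sq_eq_trace_smul_sub_det_smul_fin_two
  calc M ^ 4 = M ^ 2 * M ^ 2 := by rw [← pow_add]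
    _ = M.trace ^ 2 • M ^ 2 - (2 * M.trace * M.det) • M + (M.det ^ 2) • 1 := by
      conv_lhs => rw [hsq]
      simp only [sub_mul, mul_sub, smul_mul_smul_comm, mul_one, one_mul]
      rw [← sq M]
      module
    _ = _ := by
      rw [hsq]
      module

theorem sq_eq_smul_one_of_trace_eq_zero_fin_two (ht : M.trace = 0) :
    M ^ 2 = (-M.det) • 1 := by
  rw [M.sq_eq_trace_smul_sub_det_smul_fin_two, ht, zero_smul, zero_sub, neg_smul]

end CommRing

theorem exists_eq_smul_one_of_smul_add_smul_one {n K : Type*} [Fintype n] [DecidableEq n]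
    [Field K] {M : Matrix n n K} {a b c : K} (ha : a ≠ 0) (h : a • M + b • 1 = c • 1) :
    ∃ e : K, M = e • 1 :=
  ⟨a⁻¹ * (c - b), by
    rw [mul_smul, sub_smul, ← h, add_sub_cancel_right, inv_smul_smul₀ ha]⟩

variable {K : Type*} [Field K] {M : Matrix (Fin 2) (Fin 2) K}

theorem trace_ne_zero_and_trace_sq_eq_of_pow_four_fin_two (h4 : ∃ c : K, M ^ 4 = c • 1)
    (h2 : ¬∃ c : K, M ^ 2 = c • 1) : M.trace ≠ 0 ∧ M.trace ^ 2 = 2 * M.det := by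
  have ht : M.trace ≠ 0 := fun ht ↦ h2 ⟨_, M.sq_eq_smul_one_of_trace_eq_zero_fin_two ht⟩
  refine ⟨ht, ?_⟩
  obtain ⟨c, hc⟩ := h4
  by_contra htd
  obtain ⟨e, rfl⟩ := exists_eq_smul_one_of_smul_add_smul_one
    (mul_ne_zero ht (sub_ne_zero.mpr htd)) (M.pow_four_eq_fin_two.symm.trans hc)
  exact h2 ⟨e ^ 2, by rw [_root_.smul_pow, one_pow]⟩

theorem not_isRoot_charpoly_of_trace_sq_eq_fin_two (hK : ¬∃ x : K, x ^ 2 = -1)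
    (ht : M.trace ≠ 0) (htd : M.trace ^ 2 = 2 * M.det) (x : K) : ¬M.charpoly.IsRoot x := by
  intro hx
  simp only [charpoly_fin_two, IsRoot, eval_add, eval_sub, eval_mul, eval_pow, eval_X,
    eval_C] at hx
  refine hK ⟨(2 * x - M.trace) / M.trace, ?_⟩
  field_simp
  linear_combination 4 * hx + 2 * htd

end Matrix

theorem charpoly_irreducible_of_order_four_general (k : Type*) [Field k]
    (hk : ¬∃ x : k, x ^ 2 = -1) (h : Matrix.GeneralLinearGroup (Fin 2) k)
    (h4 : ∃ c : k, ((h ^ 4 : Matrix.GeneralLinearGroup (Fin 2) k) :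
        Matrix (Fin 2) (Fin 2) k) = c • (1 : Matrix (Fin 2) (Fin 2) k))
    (h2 : ¬∃ c : k, ((h ^ 2 : Matrix.GeneralLinearGroup (Fin 2) k) :
        Matrix (Fin 2) (Fin 2) k) = c • (1 : Matrix (Fin 2) (Fin 2) k)) :
    (¬∃ x : k, ((h : Matrix (Fin 2) (Fin 2) k).charpoly).IsRoot x) ∧
      Irreducible ((h : Matrix (Fin 2) (Fin 2) k).charpoly) := by
  simp only [Units.val_pow_eq_pow_val] at h4 h2
  obtain ⟨ht, htd⟩ := Matrix.trace_ne_zero_and_trace_sq_eq_of_pow_four_fin_two h4 h2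
  have hroot := Matrix.not_isRoot_charpoly_of_trace_sq_eq_fin_two hk ht htd
  refine ⟨not_exists.mpr hroot, irreducible_of_degree_le_three_of_not_isRoot ?_ hroot⟩
  simp [Matrix.charpoly_natDegree_eq_dim]

/-- Let `k` be a field of characteristic zero in which `-1`
is not a square, and let `h ∈ GL₂(k)` be such that `h⁴` is scalar but `h²` is
not (so the image of `h` in `PGL₂(k)` has order 4).  Then the characteristic
polynomial of `h` has no root in `k`; equivalently, it is irreducible over `k`. -/
theorem charpoly_irreducible_of_order_four (k : Type*) [Field k] [CharZero k]
    (hk : ¬∃ x : k, x ^ 2 = -1) (h : Matrix.GeneralLinearGroup (Fin 2) k)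
    (h4 : ∃ c : k, ((h ^ 4 : Matrix.GeneralLinearGroup (Fin 2) k) :
        Matrix (Fin 2) (Fin 2) k) = c • (1 : Matrix (Fin 2) (Fin 2) k))
    (h2 : ¬∃ c : k, ((h ^ 2 : Matrix.GeneralLinearGroup (Fin 2) k) :
        Matrix (Fin 2) (Fin 2) k) = c • (1 : Matrix (Fin 2) (Fin 2) k)) :
    (¬∃ x : k, ((h : Matrix (Fin 2) (Fin 2) k).charpoly).IsRoot x) ∧
      Irreducible ((h : Matrix (Fin 2) (Fin 2) k).charpoly) :=
  charpoly_irreducible_of_order_four_general k hk h h4 h2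
end

section
/- Let k be a field of characteristic zero that contains no primitive cube root of unity (there is no x ∈ k with x² + x + 1 = 0). Let h be an invertible 2×2 matrix over k such that h³ is a scalar matrix but h itself is not a scalar matrix (i.e. the image of h in PGL₂(k) has order 3). Then the characteristic polynomial of h has no root in k; equivalently, it is irreducible over k. -/
/-!
By Cayley–Hamilton, `A³ = (t² - d) • A - t d • 1` for a `2 × 2` matrix with trace `t` and
determinant `d`. If `A³` is scalar and `A` is not, this forces `t² = d`, so the characteristic
polynomial is `X² - tX + t²`, whose roots are `-t ω` for the primitive cube roots of unity `ω`.
A polynomial of degree two without roots is irreducible.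
-/

open Polynomial

namespace Matrix

variable {R : Type*} [CommRing R]

theorem sq_fin_two (A : Matrix (Fin 2) (Fin 2) R) : A ^ 2 = A.trace • A - A.det • 1 := by
  ext i j
  fin_cases i <;> fin_cases j <;>
    simp [sq, mul_apply, trace_fin_two, det_fin_two] <;> ring

theorem pow_three_fin_two (A : Matrix (Fin 2) (Fin 2) R) :
    A ^ 3 = (A.trace ^ 2 - A.det) • A - (A.trace * A.det) • 1 := by
  rw [pow_succ, sq_fin_two, sub_mul, smul_mul_assoc, smul_mul_assoc, one_mul, ← sq, sq_fin_two]
  module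

variable {K : Type*} [Field K]

theorem trace_sq_eq_det_of_pow_three_eq_smul_one {A : Matrix (Fin 2) (Fin 2) K} {c : K}
    (hc : A ^ 3 = c • 1) (hA : ¬∃ a : K, A = a • 1) : A.trace ^ 2 = A.det := by
  by_contra hne
  have hlin : (A.trace ^ 2 - A.det) • A = (c + A.trace * A.det) • 1 := by
    rw [pow_three_fin_two] at hc
    rw [add_smul, ← hc]
    abel
  exact hA ⟨(A.trace ^ 2 - A.det)⁻¹ * (c + A.trace * A.det), by
    rw [mul_smul, ← hlin, inv_smul_smul₀ (sub_ne_zero.mpr hne)]⟩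

end Matrix

namespace Polynomial

variable {K : Type*} [Field K]

theorem exists_sq_add_self_add_one_eq_zero_of_isRoot {t x : K} (ht : t ≠ 0)
    (hx : (X ^ 2 - C t * X + C (t ^ 2)).IsRoot x) : ∃ y : K, y ^ 2 + y + 1 = 0 := by
  refine ⟨-(x / t), ?_⟩
  simp only [IsRoot, eval_add, eval_sub, eval_pow, eval_mul, eval_X, eval_C] at hx
  field_simp
  linear_combination hx

end Polynomial

theorem Matrix.charpoly_not_isRoot_of_pow_three_eq_smul_one {K : Type*} [Field K]
    (hK : ¬∃ y : K, y ^ 2 + y + 1 = 0) {A : Matrix (Fin 2) (Fin 2) K} (hdet : A.det ≠ 0) {c : K}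
    (hc : A ^ 3 = c • 1) (hA : ¬∃ a : K, A = a • 1) (x : K) : ¬A.charpoly.IsRoot x := by
  have htd := trace_sq_eq_det_of_pow_three_eq_smul_one hc hA
  have ht : A.trace ≠ 0 := by
    rintro h0
    exact hdet (by rw [← htd, h0, zero_pow two_ne_zero])
  rw [charpoly_fin_two, ← htd]
  exact fun hx => hK (exists_sq_add_self_add_one_eq_zero_of_isRoot ht hx)

theorem charpoly_irreducible_of_order_three_general (k : Type*) [Field k]
    (hk : ¬∃ x : k, x ^ 2 + x + 1 = 0) (h : Matrix.GeneralLinearGroup (Fin 2) k)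
    (h3 : ∃ c : k, ((h ^ 3 : Matrix.GeneralLinearGroup (Fin 2) k) :
        Matrix (Fin 2) (Fin 2) k) = c • (1 : Matrix (Fin 2) (Fin 2) k))
    (h1 : ¬∃ c : k, ((h : Matrix (Fin 2) (Fin 2) k)) = c • (1 : Matrix (Fin 2) (Fin 2) k)) :
    (¬∃ x : k, ((h : Matrix (Fin 2) (Fin 2) k).charpoly).IsRoot x) ∧
      Irreducible ((h : Matrix (Fin 2) (Fin 2) k).charpoly) := by
  obtain ⟨c, hc⟩ := h3
  have hdet : (h : Matrix (Fin 2) (Fin 2) k).det ≠ 0 := (Matrix.isUnits_det_units h).ne_zero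
  have hroot := Matrix.charpoly_not_isRoot_of_pow_three_eq_smul_one hk hdet
    (by rwa [← Units.val_pow_eq_pow_val]) h1
  refine ⟨not_exists.mpr hroot, irreducible_of_degree_le_three_of_not_isRoot ?_ hroot⟩
  simp [Matrix.charpoly_natDegree_eq_dim]

/-- Let `k` be a field of characteristic zero containing no
primitive cube root of unity, and let `h ∈ GL₂(k)` be such that `h³` is scalar
but `h` is not (so the image of `h` in `PGL₂(k)` has order 3).  Then the
characteristic polynomial of `h` has no root in `k`; equivalently, it is
irreducible over `k`. -/
theorem charpoly_irreducible_of_order_three (k : Type*) [Field k] [CharZero k]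
    (hk : ¬∃ x : k, x ^ 2 + x + 1 = 0) (h : Matrix.GeneralLinearGroup (Fin 2) k)
    (h3 : ∃ c : k, ((h ^ 3 : Matrix.GeneralLinearGroup (Fin 2) k) :
        Matrix (Fin 2) (Fin 2) k) = c • (1 : Matrix (Fin 2) (Fin 2) k))
    (h1 : ¬∃ c : k, ((h : Matrix (Fin 2) (Fin 2) k)) = c • (1 : Matrix (Fin 2) (Fin 2) k)) :
    (¬∃ x : k, ((h : Matrix (Fin 2) (Fin 2) k).charpoly).IsRoot x) ∧
      Irreducible ((h : Matrix (Fin 2) (Fin 2) k).charpoly) :=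
  charpoly_irreducible_of_order_three_general k hk h h3 h1
end
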